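/- Let B be a finite-dimensional C*-algebra, let H be a Hilbert C*-module over B, and let (vⱼ)ⱼ∈ℕ be a sequence in H such that ⟨vᵢ, vⱼ⟩ = 0 whenever i ≠ j and each ⟨vⱼ, vⱼ⟩ is a projection in B. Then for every h ∈ H the series Σⱼ vⱼ·⟨vⱼ, h⟩ converges in H (equivalently, the partial sums Pₙh = Σⱼ₌₁ⁿ vⱼ·⟨vⱼ, h⟩ form a Cauchy sequence in H). -/

import Mathlib

open scoped InnerProductSpace RightActions

/-- The December 2024 Mathlib `CStarModule` (a right Hilbert C⋆-module, with `Aᵐᵒᵖ` acting),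
restated here under a new name because Mathlib's `CStarModule` is now a left module. -/
class CStarModuleRight (A E : Type*) [NonUnitalSemiring A] [StarRing A] [Module ℂ A]
    [AddCommGroup E] [Module ℂ E] [PartialOrder A] [SMul Aᵐᵒᵖ E] [Norm A] [Norm E]
    extends Inner A E where
  inner_add_right {x} {y} {z} : inner x (y + z) = inner x y + inner x z
  inner_self_nonneg {x} : 0 ≤ inner x x
  inner_self {x} : inner x x = 0 ↔ x = 0
  inner_op_smul_right {a : A} {x y : E} : inner x (y <• a) = inner x y * a
  inner_smul_right_complex {z : ℂ} {x} {y} : inner x (z • y) = z • inner x y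
  star_inner x y : star (inner x y) = inner y x
  norm_eq_sqrt_norm_inner_self x : ‖x‖ = √‖inner x x‖

namespace CStarModuleRight

variable {B H : Type*} [CStarAlgebra B] [PartialOrder B]
    [NormedAddCommGroup H] [NormedSpace ℂ H] [Module Bᵐᵒᵖ H] [CStarModuleRight B H]

lemma inner_zero_right' (x : H) : ⟪x, (0 : H)⟫_B = 0 := by
  have h := (CStarModuleRight.inner_add_right (A := B) (x := x) (y := (0 : H)) (z := 0))
  simp only [add_zero] at h
  exact (left_eq_add.mp h)

lemma inner_neg_right' (x y : H) : ⟪x, -y⟫_B = -⟪x, y⟫_B := by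
  have h := (CStarModuleRight.inner_add_right (A := B) (x := x) (y := -y) (z := y))
  rw [neg_add_cancel, inner_zero_right'] at h
  exact eq_neg_of_add_eq_zero_left h.symm

lemma inner_sub_right (x y z : H) : ⟪x, y - z⟫_B = ⟪x, y⟫_B - ⟪x, z⟫_B := by
  rw [sub_eq_add_neg, CStarModuleRight.inner_add_right, inner_neg_right', ← sub_eq_add_neg]

lemma inner_sub_left (x y z : H) : ⟪x - y, z⟫_B = ⟪x, z⟫_B - ⟪y, z⟫_B := by
  rw [← CStarModuleRight.star_inner z, inner_sub_right, star_sub,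
    CStarModuleRight.star_inner, CStarModuleRight.star_inner]

lemma inner_op_smul_left (a : B) (x y : H) : ⟪x <• a, y⟫_B = star a * ⟪x, y⟫_B := by
  rw [← CStarModuleRight.star_inner y, CStarModuleRight.inner_op_smul_right, star_mul,
    CStarModuleRight.star_inner]

lemma inner_sum_right {ι : Type*} (s : Finset ι) (x : H) (f : ι → H) :
    ⟪x, ∑ i ∈ s, f i⟫_B = ∑ i ∈ s, ⟪x, f i⟫_B := by
  classical
  induction s using Finset.induction_on with
  | empty => simp [inner_zero_right']
  | insert i s hi ih =>
    rw [Finset.sum_insert hi, Finset.sum_insert hi, CStarModuleRight.inner_add_right, ih]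

lemma inner_sum_left {ι : Type*} (s : Finset ι) (x : H) (f : ι → H) :
    ⟪∑ i ∈ s, f i, x⟫_B = ∑ i ∈ s, ⟪f i, x⟫_B := by
  rw [← CStarModuleRight.star_inner x, inner_sum_right, star_sum]
  simp only [CStarModuleRight.star_inner]

end CStarModuleRight


open Filter

/-- A monotone sequence bounded above in a finite-dimensional C⋆-algebra converges. -/
lemma monotone_bddAbove_tendsto {B : Type*}
    [CStarAlgebra B] [PartialOrder B] [StarOrderedRing B] [FiniteDimensional ℂ B]
    (S : ℕ → B) (hmono : Monotone S) (c : B) (hb : ∀ n, S n ≤ c) :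
    ∃ L, Tendsto S atTop (nhds L) := by
  have hbdd : Bornology.IsBounded (Set.Icc (S 0) c) := by
    have : ∀ x ∈ Set.Icc (S 0) c, ‖x - S 0‖ ≤ ‖c - S 0‖ := by
      intro x hx
      exact CStarAlgebra.norm_le_norm_of_nonneg_of_le (by simpa using hx.1)
        (by exact sub_le_sub_right hx.2 _)
    have h2 : Set.Icc (S 0) c ⊆ Metric.closedBall (S 0) ‖c - S 0‖ := by
      intro x hx
      simpa [Metric.mem_closedBall, dist_eq_norm] using this x hx
    exact (Metric.isBounded_closedBall).subset h2
  have hmem : ∀ n, S n ∈ Set.Icc (S 0) c := fun n => ⟨hmono (Nat.zero_le n), hb n⟩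
  obtain ⟨L, -, φ, hφ, hL⟩ := tendsto_subseq_of_bounded hbdd hmem
  refine ⟨L, ?_⟩
  have hSle : ∀ n, S n ≤ L := by
    intro n
    refine ge_of_tendsto hL ?_
    filter_upwards [eventually_ge_atTop n] with k hk
    exact hmono ((hk.trans (hφ.le_apply)))
  rw [Metric.tendsto_atTop]
  intro ε hε
  obtain ⟨k, hk⟩ := (Metric.tendsto_atTop.mp hL) ε hε
  refine ⟨φ k, fun n hn => ?_⟩
  have h1 : 0 ≤ L - S n := sub_nonneg.mpr (hSle n)
  have h2 : L - S n ≤ L - S (φ k) := sub_le_sub_left (hmono hn) _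
  have := CStarAlgebra.norm_le_norm_of_nonneg_of_le h1 h2
  calc dist (S n) L = ‖L - S n‖ := by rw [dist_eq_norm, norm_sub_rev]
    _ ≤ ‖L - S (φ k)‖ := this
    _ < ε := by simpa [dist_eq_norm, norm_sub_rev] using hk k le_rfl

open scoped InnerProductSpace RightActions

/-- For a sequence of pairwise orthogonal vectors `v j` in a Hilbert C⋆-module over a
finite-dimensional C⋆-algebra, whose self inner products are projections, the series
`∑ j, v j • ⟪v j, h⟫` converges in `H` for every `h`. -/
theorem orthogonal_series_converges {B H : Type*}
    [CStarAlgebra B] [PartialOrder B] [StarOrderedRing B] [FiniteDimensional ℂ B]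
    [NormedAddCommGroup H] [NormedSpace ℂ H] [Module Bᵐᵒᵖ H] [CStarModuleRight B H]
    [CompleteSpace H]
    (v : ℕ → H)
    (horth : ∀ i j, i ≠ j → ⟪v i, v j⟫_B = 0)
    (hproj : ∀ j, IsSelfAdjoint (⟪v j, v j⟫_B) ∧ IsIdempotentElem (⟪v j, v j⟫_B)) :
    ∀ h : H, ∃ L : H,
      Filter.Tendsto (fun n => ∑ j ∈ Finset.range n, v j <• ⟪v j, h⟫_B)
        Filter.atTop (nhds L) := by
  intro h
  set a : ℕ → B := fun j => ⟪v j, h⟫_B with ha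
  set p : ℕ → B := fun j => ⟪v j, v j⟫_B with hp
  -- v j <• p j = v j
  have hvp : ∀ j, v j <• p j = v j := by
    intro j
    have hsa : star (p j) = p j := (hproj j).1
    have hid : p j * p j = p j := (hproj j).2
    have : ⟪v j <• p j - v j, v j <• p j - v j⟫_B = 0 := by
      simp only [CStarModuleRight.inner_sub_left, CStarModuleRight.inner_sub_right,
        CStarModuleRight.inner_op_smul_left, CStarModuleRight.inner_op_smul_right, hsa]
      rw [show ⟪v j, v j⟫_B = p j from rfl]
      rw [hid]
      simp
    exact sub_eq_zero.mp (CStarModuleRight.inner_self.mp this)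
  have hpa : ∀ j, p j * a j = a j := by
    intro j
    have hsa : star (p j) = p j := (hproj j).1
    calc p j * a j = star (p j) * ⟪v j, h⟫_B := by rw [hsa]
      _ = ⟪v j <• p j, h⟫_B := by rw [CStarModuleRight.inner_op_smul_left]
      _ = a j := by rw [hvp j]
  set P : ℕ → H := fun n => ∑ j ∈ Finset.range n, v j <• a j with hP
  set S : ℕ → B := fun n => ∑ j ∈ Finset.range n, star (a j) * a j with hS
  -- inner of partial sums over any finset
  have key : ∀ s : Finset ℕ,
      ⟪∑ j ∈ s, v j <• a j, ∑ j ∈ s, v j <• a j⟫_B = ∑ j ∈ s, star (a j) * a j := by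
    intro s
    rw [CStarModuleRight.inner_sum_left]
    refine Finset.sum_congr rfl fun i hi => ?_
    rw [CStarModuleRight.inner_sum_right]
    rw [Finset.sum_eq_single i]
    · rw [CStarModuleRight.inner_op_smul_left, CStarModuleRight.inner_op_smul_right]
      rw [show ⟪v i, v i⟫_B = p i from rfl, hpa i]
    · intro b hb hbi
      rw [CStarModuleRight.inner_op_smul_left, CStarModuleRight.inner_op_smul_right,
        horth i b (Ne.symm hbi)]
      simp
    · intro hi'; exact absurd hi hi'
  have hPh : ∀ n, ⟪P n, h⟫_B = S n := by
    intro n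
    rw [hP, hS]
    simp only [CStarModuleRight.inner_sum_left, CStarModuleRight.inner_op_smul_left]
    rfl
  have hSsa : ∀ n, star (S n) = S n := by
    intro n
    rw [hS]
    simp only [star_sum, star_mul, star_star]
  -- S n ≤ ⟪h, h⟫
  have hSle : ∀ n, S n ≤ ⟪h, h⟫_B := by
    intro n
    have h0 : (0 : B) ≤ ⟪h - P n, h - P n⟫_B := CStarModuleRight.inner_self_nonneg
    have hexp : ⟪h - P n, h - P n⟫_B = ⟪h, h⟫_B - S n := by
      simp only [CStarModuleRight.inner_sub_left, CStarModuleRight.inner_sub_right]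
      have h1 : ⟪P n, h⟫_B = S n := hPh n
      have h2 : ⟪h, P n⟫_B = S n := by
        rw [← CStarModuleRight.star_inner, h1, hSsa]
      have h3 : ⟪P n, P n⟫_B = S n := key (Finset.range n)
      rw [h1, h2, h3]; abel
    rw [hexp] at h0
    exact sub_nonneg.mp h0
  have hSmono : Monotone S := by
    apply monotone_nat_of_le_succ
    intro n
    rw [hS]
    simp only [Finset.sum_range_succ]
    exact le_add_of_nonneg_right (star_mul_self_nonneg _)
  obtain ⟨LB, hLB⟩ := monotone_bddAbove_tendsto S hSmono _ hSle
  have hScauchy : CauchySeq S := hLB.cauchySeq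
  -- dist P n P m
  have hdist : ∀ n m, n ≤ m → dist (P n) (P m) = Real.sqrt (dist (S n) (S m)) := by
    intro n m hnm
    have hsub : P m - P n = ∑ j ∈ Finset.Ico n m, v j <• a j := by
      rw [hP]
      rw [← Finset.sum_Ico_eq_sub _ hnm]
    have hsubS : S m - S n = ∑ j ∈ Finset.Ico n m, star (a j) * a j := by
      rw [hS, ← Finset.sum_Ico_eq_sub _ hnm]
    rw [dist_eq_norm, norm_sub_rev, CStarModuleRight.norm_eq_sqrt_norm_inner_self (A := B),
      hsub, key, ← hsubS, dist_eq_norm, norm_sub_rev]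
  have hPcauchy : CauchySeq P := by
    rw [Metric.cauchySeq_iff]
    intro ε hε
    obtain ⟨N, hN⟩ := Metric.cauchySeq_iff.mp hScauchy (ε ^ 2) (by positivity)
    refine ⟨N, fun m hm n hn => ?_⟩
    rcases le_total n m with hnm | hnm
    · rw [dist_comm, hdist n m hnm]
      calc Real.sqrt (dist (S n) (S m)) < Real.sqrt (ε ^ 2) :=
            Real.sqrt_lt_sqrt dist_nonneg (hN n hn m hm)
        _ = ε := by rw [Real.sqrt_sq hε.le]
    · rw [hdist m n hnm]
      calc Real.sqrt (dist (S m) (S n)) < Real.sqrt (ε ^ 2) :=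
            Real.sqrt_lt_sqrt dist_nonneg (hN m hm n hn)
        _ = ε := by rw [Real.sqrt_sq hε.le]
  obtain ⟨L, hL⟩ := cauchySeq_tendsto_of_complete hPcauchy
  exact ⟨L, hL⟩
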